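/- arXiv:1006.2315 — 5 statements merged into one kernel-verified Lean document; each statement's English description precedes it below -/
import Mathlib

section
/- Let f : ℝ → ℝ be a real-analytic function that is periodic (f(x+p) = f(x) for all x, for some period p > 0), and let γ > 0. Suppose f(x+δ) + γδ ≥ f(x) for all x ∈ ℝ and all δ ≥ 0. If there exist x̂ ∈ ℝ and δ̂ > 0 with f(x̂+δ̂) + γδ̂ = f(x̂), then a contradiction follows; i.e., in fact f(x+δ) + γδ > f(x) for all x ∈ ℝ and δ > 0. -/
/-- A real-analytic periodic function `f` satisfying `f(x+δ) + γδ ≥ f(x)` for all `δ ≥ 0`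
in fact satisfies the strict inequality for all `δ > 0`. -/
theorem stmt0 (f : ℝ → ℝ) (p γ : ℝ) (hp : 0 < p)
    (hf : AnalyticOnNhd ℝ f Set.univ)
    (hper : ∀ x, f (x + p) = f x) (hγ : 0 < γ)
    (hineq : ∀ x : ℝ, ∀ δ : ℝ, 0 ≤ δ → f x ≤ f (x + δ) + γ * δ) :
    ∀ x : ℝ, ∀ δ : ℝ, 0 < δ → f x < f (x + δ) + γ * δ := by
  by_contra h
  push_neg at h
  obtain ⟨x, δ, hδ, hle⟩ := h
  set g : ℝ → ℝ := fun t => f t + γ * t with hg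
  have hganal : AnalyticOnNhd ℝ g Set.univ := by
    apply hf.add
    apply AnalyticOnNhd.mul analyticOnNhd_const (analyticOnNhd_id)
  have hmono : Monotone g := by
    intro a b hab
    have := hineq a (b - a) (by linarith)
    simp only [hg]
    have : f a ≤ f b + γ * (b - a) := by simpa [add_sub_cancel] using this
    nlinarith
  have hgeq : g x = g (x + δ) := by
    have h1 := hmono (le_of_lt (by linarith : x < x + δ))
    simp only [hg] at h1 ⊢
    nlinarith
  -- g is constant on [x, x+δ]
  have hconst : Set.EqOn g (fun _ => g x) (Set.Icc x (x + δ)) := by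
    intro t ht
    have h1 := hmono ht.1
    have h2 := hmono ht.2
    have := hgeq
    simp only [Set.mem_Icc] at *
    exact le_antisymm (by linarith) h1
  -- analytic identity theorem
  have hEq : ∀ t : ℝ, g t = g x := by
    have : Set.EqOn g (fun _ => g x) Set.univ := by
      apply hganal.eqOn_of_preconnected_of_eventuallyEq analyticOnNhd_const
        isPreconnected_univ (Set.mem_univ (x + δ/2))
      have hmem : Set.Ioo x (x + δ) ∈ nhds (x + δ/2) := by
        apply Ioo_mem_nhds <;> linarith
      exact Filter.eventuallyEq_of_mem hmem fun t ht =>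
        hconst (Set.mem_Icc_of_Ioo ht)
    intro t; exact this (Set.mem_univ t)
  have h0 := hEq 0
  have h1 := hEq p
  have hpp := hper 0
  simp only [hg] at h0 h1
  rw [zero_add] at hpp
  nlinarith
end

section
/- Let V : (0,∞) → (0,∞) be real-analytic and multiplicatively periodic with some period λ > 1 (i.e., V(λx) = V(x) for all x > 0), and let γ > 0. Suppose B is a dense subset of [1,∞) such that for every b ∈ B, liminf_{ε→0} (V(ε/b)·b^γ − V(ε)) ≥ 0. Then for any b₀ > 1, inf over ε > 0 and b ≥ b₀ of (V(ε/b)·b^γ − V(ε)) is strictly positive. -/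
/-!
With `W x = V x / x ^ γ`, the scaling gap `V (ε / b) * b ^ γ - V ε` equals
`ε ^ γ * (W (ε / b) - W ε)`. As a function of `ε` the gap is `λ`-periodic, so its liminf
at `0` is at most each of its values: the hypothesis makes it nonnegative for `b ∈ B`,
hence, by continuity in `b`, for all `b ≥ 1`, i.e. `W` is antitone. Then the gap is
nondecreasing in `b`, and for `b = b₀` it attains its minimum over one period. Were that
minimum `0`, `W` would be constant on some `[ε / b₀, ε]`, hence on `(0, ∞)` by analyticity,
contradicting `W (λ x) = W x / λ ^ γ`.
-/

open Filter Set Topology Real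

def PosMulPeriodic (f : ℝ → ℝ) (c : ℝ) : Prop :=
  ∀ x > 0, f (c * x) = f x

namespace PosMulPeriodic

variable {f : ℝ → ℝ} {c : ℝ}

lemma zpow (hf : PosMulPeriodic f c) (hc : 0 < c) (n : ℤ) {x : ℝ} (hx : 0 < x) :
    f (c ^ n * x) = f x := by
  induction n using Int.induction_on with
  | zero => simp
  | succ k ih =>
    rw [zpow_add_one₀ hc.ne', mul_comm _ c, mul_assoc, hf _ (by positivity), ih]
  | pred k ih =>
    rw [← ih, ← hf _ (by positivity), ← mul_assoc, ← zpow_one_add₀ hc.ne', add_sub_cancel]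

lemma exists_mem_Icc (hf : PosMulPeriodic f c) (hc : 1 < c) {x : ℝ} (hx : 0 < x) :
    ∃ y ∈ Icc 1 c, f y = f x := by
  have hc₀ : 0 < c := one_pos.trans hc
  obtain ⟨n, hn₁, hn₂⟩ := exists_mem_Ico_zpow hx hc
  refine ⟨c ^ (-n) * x, ⟨?_, ?_⟩, hf.zpow hc₀ _ hx⟩
  · rw [zpow_neg, ← div_eq_inv_mul, one_le_div (zpow_pos hc₀ n)]
    exact hn₁
  · rw [zpow_neg, ← div_eq_inv_mul, div_le_iff₀ (zpow_pos hc₀ n), ← zpow_one_add₀ hc₀.ne',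
      add_comm]
    exact hn₂.le

lemma exists_isMinOn (hf : PosMulPeriodic f c) (hc : 1 < c)
    (hcont : ContinuousOn f (Icc 1 c)) : ∃ x₀ > 0, IsMinOn f (Ioi 0) x₀ := by
  obtain ⟨x₀, hx₀, hmin⟩ :=
    isCompact_Icc.exists_isMinOn (nonempty_Icc.mpr hc.le) hcont
  refine ⟨x₀, one_pos.trans_le hx₀.1, isMinOn_iff.mpr fun x hx => ?_⟩
  obtain ⟨y, hy, hfy⟩ := hf.exists_mem_Icc hc hx
  exact hfy ▸ isMinOn_iff.mp hmin y hy

/-- A periodic function takes each of its values arbitrarily close to `0`. -/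
lemma nonneg_of_liminf_nonneg (hf : PosMulPeriodic f c) (hc : 1 < c)
    (hcont : ContinuousOn f (Icc 1 c)) (hlim : 0 ≤ liminf f (𝓝[>] 0)) {x : ℝ} (hx : 0 < x) :
    0 ≤ f x := by
  have hc₀ : 0 < c := one_pos.trans hc
  obtain ⟨x₀, -, hmin⟩ := hf.exists_isMinOn hc hcont
  have hbdd : IsBoundedUnder (· ≥ ·) (𝓝[>] 0) f :=
    ⟨f x₀, eventually_map.mpr (eventually_mem_nhdsWithin.mono fun y hy => hmin hy)⟩
  have htend : Tendsto (fun n : ℕ => c ^ (-(n : ℤ)) * x) atTop (𝓝[>] 0) := by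
    refine tendsto_nhdsWithin_iff.mpr
      ⟨?_, Eventually.of_forall fun n => mem_Ioi.mpr (by positivity)⟩
    simpa [zpow_neg, ← inv_pow] using
      (tendsto_pow_atTop_nhds_zero_of_lt_one (inv_nonneg.mpr hc₀.le)
        (inv_lt_one_of_one_lt₀ hc)).mul_const x
  have hfreq : ∃ᶠ y in 𝓝[>] 0, f y ≤ f x :=
    htend.frequently (Frequently.of_forall fun n => (hf.zpow hc₀ _ hx).le)
  exact hlim.trans (liminf_le_of_frequently_le hfreq hbdd)

end PosMulPeriodic

lemma analyticAt_rpow_const_of_pos {x : ℝ} (hx : 0 < x) (γ : ℝ) :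
    AnalyticAt ℝ (fun y : ℝ => y ^ γ) x := by
  have : (fun y : ℝ => exp (log y * γ)) =ᶠ[𝓝 x] fun y => y ^ γ := by
    filter_upwards [Ioi_mem_nhds hx] with y hy
    exact (rpow_def_of_pos hy γ).symm
  exact (analyticAt_rexp.comp ((analyticAt_log hx).mul analyticAt_const)).congr this

lemma AnalyticOnNhd.eqOn_const_of_antitoneOn {W : ℝ → ℝ} {U : Set ℝ}
    (hW : AnalyticOnNhd ℝ W U) (hU : IsPreconnected U) (hanti : AntitoneOn W U) {a b : ℝ}
    (ha : a ∈ U) (hb : b ∈ U) (hab : a < b) (heq : W a = W b) : EqOn W (fun _ => W a) U := by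
  have hsub : Icc a b ⊆ U := hU.Icc_subset ha hb
  have hconst : EqOn W (fun _ => W a) (Ioo a b) := fun x hx =>
    le_antisymm (hanti ha (hsub (Ioo_subset_Icc_self hx)) hx.1.le)
      (heq ▸ hanti (hsub (Ioo_subset_Icc_self hx)) hb hx.2.le)
  have hmid : (a + b) / 2 ∈ Ioo a b := ⟨by linarith, by linarith⟩
  exact hW.eqOn_of_preconnected_of_eventuallyEq analyticOnNhd_const hU
    (hsub (Ioo_subset_Icc_self hmid))
    (eventually_of_mem (isOpen_Ioo.mem_nhds hmid) hconst)

noncomputable def scalingGap (V : ℝ → ℝ) (γ b ε : ℝ) : ℝ :=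
  V (ε / b) * b ^ γ - V ε

section ScalingGap

variable {V : ℝ → ℝ} {lam γ : ℝ}

lemma scalingGap_eq_mul_sub {b ε : ℝ} (hb : 0 < b) (hε : 0 < ε) :
    scalingGap V γ b ε = ε ^ γ * (V (ε / b) / (ε / b) ^ γ - V ε / ε ^ γ) := by
  have := rpow_pos_of_pos hb γ
  have := rpow_pos_of_pos hε γ
  rw [scalingGap, div_rpow hε.le hb.le]
  field_simp

lemma PosMulPeriodic.scalingGap (hV : PosMulPeriodic V lam) {b : ℝ} (hb : 0 < b) :
    PosMulPeriodic (scalingGap V γ b) lam := fun x hx => by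
  simp only [_root_.scalingGap, mul_div_assoc, hV x hx, hV (x / b) (div_pos hx hb)]

lemma ContinuousOn.scalingGap (hV : ContinuousOn V (Ioi 0)) {b : ℝ} (hb : 0 < b) :
    ContinuousOn (scalingGap V γ b) (Ioi 0) :=
  ((hV.comp (continuousOn_id.div_const b) fun _ hx => div_pos hx hb).mul continuousOn_const).sub hV

lemma continuousAt_scalingGap_left (hV : ContinuousOn V (Ioi 0)) {b ε : ℝ} (hb : 0 < b)
    (hε : 0 < ε) : ContinuousAt (fun b => scalingGap V γ b ε) b := by
  refine ((hV.continuousAt (Ioi_mem_nhds (div_pos hε hb))).comp ?_ |>.mul ?_).sub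
    continuousAt_const
  · exact continuousAt_const.div continuousAt_id hb.ne'
  · exact continuousAt_rpow_const b γ (Or.inl hb.ne')

lemma scalingGap_nonneg_of_dense (hlam : 1 < lam) (hV : ContinuousOn V (Ioi 0))
    (hper : PosMulPeriodic V lam) {B : Set ℝ} (hB : B ⊆ Ici 1) (hBdense : Ici 1 ⊆ closure B)
    (hliminf : ∀ b ∈ B, 0 ≤ liminf (scalingGap V γ b) (𝓝[>] 0))
    {b ε : ℝ} (hb : 1 ≤ b) (hε : 0 < ε) : 0 ≤ scalingGap V γ b ε := by
  refine continuousWithinAt_const.closure_le (hBdense hb)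
    (continuousAt_scalingGap_left hV (one_pos.trans_le hb) hε).continuousWithinAt
    fun b' hb' => ?_
  have hb'pos : 0 < b' := one_pos.trans_le (hB hb')
  exact (hper.scalingGap hb'pos).nonneg_of_liminf_nonneg hlam
    ((hV.scalingGap hb'pos).mono fun x hx => one_pos.trans_le hx.1) (hliminf b' hb') hε

lemma antitoneOn_div_rpow_of_scalingGap_nonneg
    (h : ∀ b ≥ 1, ∀ ε > 0, 0 ≤ scalingGap V γ b ε) :
    AntitoneOn (fun x => V x / x ^ γ) (Ioi 0) := by
  intro x hx y hy hxy
  have := h (y / x) ((one_le_div hx).mpr hxy) y hy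
  rw [scalingGap_eq_mul_sub (div_pos hy hx) hy, div_div_cancel₀ hy.ne'] at this
  exact sub_nonneg.mp (nonneg_of_mul_nonneg_right this (rpow_pos_of_pos hy γ))

lemma scalingGap_le_scalingGap (hanti : AntitoneOn (fun x => V x / x ^ γ) (Ioi 0))
    {b₀ b ε : ℝ} (hb₀ : 0 < b₀) (hb : b₀ ≤ b) (hε : 0 < ε) :
    scalingGap V γ b₀ ε ≤ scalingGap V γ b ε := by
  have hb' : 0 < b := hb₀.trans_le hb
  rw [scalingGap_eq_mul_sub hb₀ hε, scalingGap_eq_mul_sub hb' hε]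
  refine mul_le_mul_of_nonneg_left (sub_le_sub_right ?_ _) (rpow_nonneg hε.le γ)
  exact hanti (div_pos hε hb') (div_pos hε hb₀) (div_le_div_of_nonneg_left hε.le hb₀ hb)

lemma scalingGap_pos (hlam : 1 < lam) (hγ : 0 < γ) (hVpos : ∀ x > 0, 0 < V x)
    (hVan : AnalyticOnNhd ℝ V (Ioi 0)) (hper : PosMulPeriodic V lam)
    (hanti : AntitoneOn (fun x => V x / x ^ γ) (Ioi 0)) {b ε : ℝ} (hb : 1 < b) (hε : 0 < ε) :
    0 < scalingGap V γ b ε := by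
  have hε' : 0 < ε / b := div_pos hε (one_pos.trans hb)
  have hlt : ε / b < ε := div_lt_self hε hb
  rw [scalingGap_eq_mul_sub (one_pos.trans hb) hε]
  refine mul_pos (rpow_pos_of_pos hε γ)
    (sub_pos.mpr ((hanti hε' hε hlt.le).lt_of_ne fun heq => ?_))
  have hWan : AnalyticOnNhd ℝ (fun x => V x / x ^ γ) (Ioi 0) := fun x hx =>
    (hVan x hx).div (analyticAt_rpow_const_of_pos hx γ) (rpow_pos_of_pos hx γ).ne'
  have hconst := hWan.eqOn_const_of_antitoneOn isPreconnected_Ioi hanti hε' hε hlt heq.symm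
  have hW : V lam / lam ^ γ < V 1 / 1 ^ γ := by
    rw [one_rpow, div_one, ← hper 1 one_pos, mul_one]
    exact div_lt_self (hVpos _ (one_pos.trans hlam)) (one_lt_rpow hlam hγ)
  exact hW.ne ((hconst (mem_Ioi.mpr (one_pos.trans hlam))).trans
    (hconst (mem_Ioi.mpr one_pos)).symm)

end ScalingGap

/-- Lemma 2 of the paper: if `V` is real-analytic on `(0,∞)`, positive, multiplicatively
periodic with period `λ > 1`, and `liminf_{ε→0} (V(ε/b) b^γ − V(ε)) ≥ 0` for all `b` in a
dense subset `B` of `[1,∞)`, then for any `b₀ > 1` the infimum of `V(ε/b) b^γ − V(ε)` over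
`ε > 0` and `b ≥ b₀` is strictly positive. -/
theorem stmt2 (V : ℝ → ℝ) (lam γ : ℝ) (hlam : 1 < lam)
    (hVpos : ∀ x > 0, 0 < V x)
    (hVan : AnalyticOnNhd ℝ V (Set.Ioi 0))
    (hper : ∀ x > 0, V (lam * x) = V x)
    (hγ : 0 < γ)
    (B : Set ℝ) (hB : B ⊆ Set.Ici 1) (hBdense : Set.Ici (1:ℝ) ⊆ closure B)
    (hliminf : ∀ b ∈ B,
      0 ≤ Filter.liminf (fun ε => V (ε / b) * b ^ γ - V ε) (nhdsWithin 0 (Set.Ioi 0)))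
    (b₀ : ℝ) (hb₀ : 1 < b₀) :
    ∃ C > 0, ∀ ε > 0, ∀ b ≥ b₀, C ≤ V (ε / b) * b ^ γ - V ε := by
  have hper : PosMulPeriodic V lam := hper
  have hb₀pos : 0 < b₀ := one_pos.trans hb₀
  have hanti : AntitoneOn (fun x => V x / x ^ γ) (Ioi 0) :=
    antitoneOn_div_rpow_of_scalingGap_nonneg fun b hb ε hε =>
      scalingGap_nonneg_of_dense hlam hVan.continuousOn hper hB hBdense hliminf hb hε
  obtain ⟨ε₁, hε₁, hmin⟩ := (hper.scalingGap (γ := γ) hb₀pos).exists_isMinOn hlam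
    ((hVan.continuousOn.scalingGap hb₀pos).mono fun x hx => one_pos.trans_le hx.1)
  refine ⟨_, scalingGap_pos hlam hγ hVpos hVan hper hanti hb₀ hε₁, fun ε hε b hb => ?_⟩
  exact (isMinOn_iff.mp hmin ε hε).trans (scalingGap_le_scalingGap hanti hb₀pos hb hε)
end

section
/- Let (Z_n) be a Galton–Watson process with offspring law given by probabilities (p_k) with p_k = 0 for k < μ, p_μ > 0, and p_ν > 0 for some ν > μ. Set d = ν − μ. Then for every n ≥ 1 and every integer m with μ^n ≤ m ≤ ν^n and m ≡ μ^n (mod d), we have P(Z_n = m) > 0. -/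
/-- The law of the sum of `r` i.i.d. samples from the offspring distribution `p`. -/
noncomputable def pmfSumIID (p : PMF ℕ) : ℕ → PMF ℕ
  | 0 => PMF.pure 0
  | r + 1 => (pmfSumIID p r).bind fun s => p.map fun k => s + k

/-- The law of the `n`-th generation size of a Galton–Watson process with offspring
distribution `p`, started from a single individual. -/
noncomputable def gwGen (p : PMF ℕ) : ℕ → PMF ℕ
  | 0 => PMF.pure 1
  | n + 1 => (gwGen p n).bind fun r => pmfSumIID p r

lemma gwSumMem (p : PMF ℕ) (μ d : ℕ)
    (hμ : μ ∈ p.support) (hν : (μ + d) ∈ p.support) :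
    ∀ r j, j ≤ r → (μ * r + d * j) ∈ (pmfSumIID p r).support := by
  intro r
  induction r with
  | zero =>
    intro j hj
    interval_cases j
    simp [pmfSumIID]
  | succ r ih =>
    intro j hj
    rcases Nat.lt_or_ge j (r + 1) with h | h
    · have hs := ih j (by omega)
      simp only [pmfSumIID, PMF.support_bind, PMF.support_map, Set.mem_iUnion]
      refine ⟨_, hs, ⟨μ, hμ, ?_⟩⟩
      ring
    · have hj' : j = r + 1 := by omega
      subst hj'
      have hs := ih r le_rfl
      simp only [pmfSumIID, PMF.support_bind, PMF.support_map, Set.mem_iUnion]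
      refine ⟨_, hs, ⟨μ + d, hν, ?_⟩⟩
      ring

lemma gw_mem (p : PMF ℕ) (μ d : ℕ) (hd : 0 < d)
    (hμ : μ ∈ p.support) (hν : (μ + d) ∈ p.support) :
    ∀ n j, μ ^ (n + 1) + d * j ≤ (μ + d) ^ (n + 1) →
      (μ ^ (n + 1) + d * j) ∈ (gwGen p (n + 1)).support := by
  have pow_decomp : ∀ k, ∃ S, (μ + d) ^ k = μ ^ k + d * S := by
    intro k
    induction k with
    | zero => exact ⟨0, by simp⟩
    | succ k ih =>
      obtain ⟨S, hS⟩ := ih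
      exact ⟨μ ^ k + (μ + d) * S, by rw [pow_succ, hS, pow_succ]; ring⟩
  intro n
  induction n with
  | zero =>
    intro j hj
    simp only [zero_add, pow_one] at hj ⊢
    have hj1 : j ≤ 1 := by
      have : d * j ≤ d * 1 := by omega
      exact Nat.le_of_mul_le_mul_left this hd
    have := gwSumMem p μ d hμ hν 1 j hj1
    simp only [gwGen, PMF.support_bind, PMF.support_pure, Set.mem_iUnion]
    exact ⟨1, by simp, by simpa using this⟩
  | succ n ih =>
    intro t ht
    obtain ⟨S, hS⟩ := pow_decomp (n + 1)
    set T := μ ^ (n + 1) + (μ + d) * S with hTdef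
    have hT : (μ + d) ^ (n + 1 + 1) = μ ^ (n + 1 + 1) + d * T := by
      rw [pow_succ, hS, pow_succ, hTdef]; ring
    have htT : t ≤ T := by
      rw [hT] at ht
      have h' : d * t ≤ d * T := Nat.le_of_add_le_add_left ht
      exact Nat.le_of_mul_le_mul_left h' hd
    set μ' := max μ 1 with hμ'def
    have hμ'pos : 0 < μ' := by positivity
    set s := min (t / μ') S with hsdef
    have hsS : s ≤ S := min_le_right _ _
    have hμs : μ * s ≤ t := by
      have h1 : s ≤ t / μ' := min_le_left _ _
      calc μ * s ≤ μ' * (t / μ') := Nat.mul_le_mul (le_max_left μ 1) h1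
        _ = (t / μ') * μ' := by ring
        _ ≤ t := Nat.div_mul_le_self t μ'
    have h5 : t ≤ μ ^ (n + 1) + (μ + d) * s := by
      rcases min_cases (t / μ') S with ⟨hs, _⟩ | ⟨hs, _⟩
      · -- s = t / μ'
        have hdm := Nat.div_add_mod t μ'
        have hml : t % μ' < μ' := Nat.mod_lt t hμ'pos
        have hts : t < μ' * s + μ' := by
          rw [hsdef, hs]; omega
        rcases Nat.eq_zero_or_pos μ with h0 | hpos
        · subst h0
          have hμ'1 : μ' = 1 := by simp [hμ'def]
          rw [hμ'1] at hts
          have hts' : t ≤ s := by omega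
          have h6 : t ≤ d * s := hts'.trans (Nat.le_mul_of_pos_left s hd)
          simpa using h6
        · have hμ'eq : μ' = μ := max_eq_left hpos
          rw [hμ'eq] at hts
          have hpow : μ ≤ μ ^ (n + 1) := Nat.le_self_pow (by omega) μ
          nlinarith [hts, hpow]
      · -- s = S
        rw [hsdef, hs]
        exact htT.trans (le_of_eq hTdef)
    have hrle : μ ^ (n + 1) + d * s ≤ (μ + d) ^ (n + 1) := by
      rw [hS]
      exact Nat.add_le_add_left (Nat.mul_le_mul_left d hsS) _
    have hr := ih s hrle
    set j' := t - μ * s with hj'def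
    have hj'r : j' ≤ μ ^ (n + 1) + d * s := by
      rw [hj'def]
      have : t ≤ (μ ^ (n + 1) + d * s) + μ * s := by nlinarith [h5]
      omega
    have hkey : μ * (μ ^ (n + 1) + d * s) + d * j' = μ ^ (n + 1 + 1) + d * t := by
      rw [hj'def]
      zify [hμs]
      ring
    have hmem := gwSumMem p μ d hμ hν (μ ^ (n + 1) + d * s) j' hj'r
    rw [hkey] at hmem
    have hun : gwGen p (n + 1 + 1) = (gwGen p (n + 1)).bind fun r => pmfSumIID p r := rfl
    rw [hun]
    simp only [PMF.support_bind, Set.mem_iUnion]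
    exact ⟨_, hr, hmem⟩

/-- If the offspring law has `p_k = 0` for `k < μ`, `p_μ > 0` and `p_ν > 0` with `ν > μ`,
and `d = ν − μ`, then for `n ≥ 1` and `μ^n ≤ m ≤ ν^n` with `m ≡ μ^n (mod d)`,
the `n`-th generation of the Galton–Watson process equals `m` with positive probability. -/
theorem stmt8 (p : PMF ℕ) (μ ν : ℕ) (hμν : μ < ν)
    (hmin : ∀ k < μ, p k = 0) (hpμ : 0 < p μ) (hpν : 0 < p ν)
    (d : ℕ) (hd : d = ν - μ)
    (n : ℕ) (hn : 1 ≤ n) (m : ℕ) (h1 : μ ^ n ≤ m) (h2 : m ≤ ν ^ n)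
    (h3 : m % d = μ ^ n % d) :
    0 < gwGen p n m := by
  have hdpos : 0 < d := by omega
  have hν : ν = μ + d := by omega
  have hdvd : d ∣ m - μ ^ n := (Nat.modEq_iff_dvd' h1).mp h3.symm
  obtain ⟨j, hj⟩ := hdvd
  have hm : m = μ ^ n + d * j := by omega
  obtain ⟨n', rfl⟩ : ∃ n', n = n' + 1 := ⟨n - 1, by omega⟩
  have hle : μ ^ (n' + 1) + d * j ≤ (μ + d) ^ (n' + 1) := by
    rw [← hν, ← hm]; exact h2
  have hmem := gw_mem p μ d hdpos
    (by rw [PMF.mem_support_iff]; exact hpμ.ne')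
    (by rw [PMF.mem_support_iff, ← hν]; exact hpν.ne') n' j hle
  rw [← hm] at hmem
  rw [PMF.mem_support_iff] at hmem
  exact pos_iff_ne_zero.mpr hmem
end

section
/- Let integers μ < ν and d = ν − μ be given. Fix n ≥ 2 and let m be an integer with μ^n ≤ m ≤ ν^n and m ≡ μ^n (mod d). Then there exists an integer r with μ^{n−1} ≤ r ≤ ν^{n−1}, r ≡ μ^{n−1} (mod d), and μr ≤ m ≤ νr, and moreover m ≡ μ·r ≡ μ^n (mod d) is attainable as a sum of r integers each in {μ, μ+d·ℕ} ∩ [μ, ν]; in particular m can be written as m = μ·r + d·j for some 0 ≤ j ≤ (ν−μ)·r/d · d, i.e., 0 ≤ m − μr ≤ (ν−μ)r with d | (m − μr). -/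
/-- Induction step: if `μ^n ≤ m ≤ ν^n` and `m ≡ μ^n (mod d)` (where `d = ν − μ`, `n ≥ 2`),
then there is `r` with `μ^{n−1} ≤ r ≤ ν^{n−1}`, `r ≡ μ^{n−1} (mod d)`, `μr ≤ m ≤ νr`,
and `d ∣ (m − μr)`. -/
theorem stmt9 (μ ν : ℕ) (hμ : 1 ≤ μ) (hμν : μ < ν) (d : ℕ) (hd : d = ν - μ)
    (n : ℕ) (hn : 2 ≤ n) (m : ℕ) (h1 : μ ^ n ≤ m) (h2 : m ≤ ν ^ n)
    (h3 : m % d = μ ^ n % d) :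
    ∃ r : ℕ, μ ^ (n - 1) ≤ r ∧ r ≤ ν ^ (n - 1) ∧ r % d = μ ^ (n - 1) % d ∧
      μ * r ≤ m ∧ m ≤ ν * r ∧ d ∣ (m - μ * r) := by
  have hdpos : 0 < d := by omega
  obtain ⟨a, rfl⟩ : ∃ a, n = a + 1 := ⟨n - 1, by omega⟩
  have ha : 1 ≤ a := by omega
  simp only [Nat.add_sub_cancel]
  have hν : ν = μ + d := by omega
  have hdvd1 : d ∣ m - μ ^ (a + 1) :=
    (Nat.modEq_iff_dvd' h1).mp (Nat.ModEq.symm h3)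
  obtain ⟨k, hk⟩ := hdvd1
  have hm : m = μ ^ (a + 1) + d * k := by omega
  have hdvd2 : d ∣ ν ^ a - μ ^ a := hd ▸ Nat.sub_dvd_pow_sub_pow ν μ a
  obtain ⟨T, hT0⟩ := hdvd2
  have hμν_pow : μ ^ a ≤ ν ^ a := Nat.pow_le_pow_left (le_of_lt hμν) a
  have hT : ν ^ a = μ ^ a + d * T := by omega
  set s := min (k / μ) T with hs
  have hμs : μ * s ≤ k := by
    calc μ * s ≤ μ * (k / μ) := Nat.mul_le_mul_left μ (min_le_left _ _)
    _ ≤ k := Nat.mul_div_le k μ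
  have e1 : μ * (μ ^ a + d * s) = μ ^ (a + 1) + d * (μ * s) := by ring
  have e2 : ν * (μ ^ a + d * s) = μ ^ (a + 1) + d * (μ ^ a + ν * s) := by
    rw [hν]; ring
  have hks : k ≤ μ ^ a + ν * s := by
    rcases le_or_gt (k / μ) T with h | h
    · have hs' : s = k / μ := min_eq_left h
      have h5 : k < μ * (k / μ) + μ := by
        have := Nat.div_add_mod k μ
        have := Nat.mod_lt k (show 0 < μ by omega)
        omega
      have h6 : μ ≤ μ ^ a := Nat.le_self_pow (by omega) μ
      have h7 : μ * s ≤ ν * s := Nat.mul_le_mul_right s (le_of_lt hμν)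
      rw [hs'] at *
      omega
    · have hs' : s = T := min_eq_right (le_of_lt h)
      have h8 : ν ^ (a + 1) = μ ^ (a + 1) + d * (μ ^ a + ν * T) := by
        calc ν ^ (a + 1) = ν * ν ^ a := by ring
        _ = ν * (μ ^ a + d * T) := by rw [hT]
        _ = μ ^ (a + 1) + d * (μ ^ a + ν * T) := by rw [hν]; ring
      have h9 : d * k ≤ d * (μ ^ a + ν * T) := by omega
      have h10 : k ≤ μ ^ a + ν * T := Nat.le_of_mul_le_mul_left h9 hdpos
      rw [hs']; exact h10
  refine ⟨μ ^ a + d * s, Nat.le_add_right _ _, ?_, by simp [Nat.add_mul_mod_self_left], ?_, ?_, ?_⟩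
  · have : d * s ≤ d * T := Nat.mul_le_mul_left d (min_le_right _ _)
    omega
  · rw [e1]
    have : d * (μ * s) ≤ d * k := Nat.mul_le_mul_left d hμs
    omega
  · rw [e2]
    have : d * k ≤ d * (μ ^ a + ν * s) := Nat.mul_le_mul_left d hks
    omega
  · rw [hm, e1, Nat.add_sub_add_left]
    exact Nat.dvd_sub (Dvd.intro k rfl) (Dvd.intro (μ * s) rfl)
end

section
/- Let W be a positive random variable with c·ε^τ ≤ P(W < ε) ≤ C·ε^τ for all 0 < ε < 1, where 0 < c ≤ C and τ > 0. Let a > 1, n ∈ ℕ, and let Z_n be a random variable independent of an i.i.d. sequence (W_i) of copies of W, with Z_n ≥ 1, such that conditionally on Z_n = m, W has the law of a^{−n}(W₁+⋯+W_m). Then P(Z_n > 1 | W < ε) ≤ (C²/c)·a^{2nτ}·ε^τ for all sufficiently small ε > 0; in particular P(Z_n > 1 | W < ε) → 0 as ε ↓ 0. -/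
open MeasureTheory ProbabilityTheory Filter Set Topology
open scoped ENNReal

/-! On `{Z_n = m}` with `m ≥ 2`, the event `W < ε` forces `W₁ + W₂ < aⁿ ε`, because the `W_i` are
a.s. positive (the upper tail bound with `τ > 0` gives `P(W ≤ 0) = 0`). By independence this has
probability at most `P(W < aⁿ ε)² ≤ C² a^{2nτ} ε^{2τ}`, uniformly in `m`, so
`P(W < ε, Z_n > 1) ≤ C² a^{2nτ} ε^{2τ}`; dividing by `P(W < ε) ≥ c ε^τ` gives the bound. -/

lemma tendsto_const_mul_rpow_nhdsGT_zero (K : ℝ) {τ : ℝ} (hτ : 0 < τ) :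
    Tendsto (fun ε : ℝ => K * ε ^ τ) (𝓝[>] 0) (𝓝 0) := by
  simpa using ((tendsto_nhdsWithin_of_tendsto_nhds tendsto_id).rpow_const_nhds_zero hτ).const_mul K

namespace ProbabilityTheory

variable {Ω : Type*} [MeasurableSpace Ω] {μ : Measure Ω}

lemma ae_pos_of_measure_lt_le_rpow [IsFiniteMeasure μ] {X : Ω → ℝ} {C τ : ℝ} (hτ : 0 < τ)
    (h : ∀ ε : ℝ, 0 < ε → ε < 1 → (μ {ω | X ω < ε}).toReal ≤ C * ε ^ τ) :
    ∀ᵐ ω ∂μ, 0 < X ω := by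
  have hnonpos : (μ {ω | X ω ≤ 0}).toReal ≤ 0 := by
    refine ge_of_tendsto (tendsto_const_mul_rpow_nhdsGT_zero C hτ) ?_
    filter_upwards [Ioo_mem_nhdsGT one_pos] with ε hε
    calc (μ {ω | X ω ≤ 0}).toReal ≤ (μ {ω | X ω < ε}).toReal :=
          measureReal_mono fun ω hω => lt_of_le_of_lt hω hε.1
      _ ≤ C * ε ^ τ := h ε hε.1 hε.2
  simp only [ae_iff, not_lt]
  exact (ENNReal.toReal_eq_zero_iff _).mp (le_antisymm hnonpos ENNReal.toReal_nonneg)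
    |>.resolve_right (measure_ne_top _ _)

lemma measure_sum_range_lt_le_sq {X : Ω → ℝ} {Xs : ℕ → Ω → ℝ}
    (hident : ∀ i, IdentDistrib (Xs i) X μ μ) (hindep : iIndepFun Xs μ)
    (hX : ∀ᵐ ω ∂μ, 0 ≤ X ω) {m : ℕ} (hm : 2 ≤ m) (t : ℝ) :
    μ {ω | ∑ i ∈ Finset.range m, Xs i ω < t} ≤ μ {ω | X ω < t} ^ 2 := by
  have hXs : ∀ᵐ ω ∂μ, ∀ i, 0 ≤ Xs i ω :=
    ae_all_iff.2 fun i => (hident i).symm.ae_snd measurableSet_Ici hX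
  calc μ {ω | ∑ i ∈ Finset.range m, Xs i ω < t}
      ≤ μ (Xs 0 ⁻¹' Iio t ∩ Xs 1 ⁻¹' Iio t) := by
        refine measure_mono_ae ?_
        filter_upwards [hXs] with ω hω (hsum : ∑ i ∈ Finset.range m, Xs i ω < t)
        have hpair : Xs 0 ω + Xs 1 ω ≤ ∑ i ∈ Finset.range m, Xs i ω :=
          Finset.add_le_sum (fun i _ => hω i) (by simp; omega) (by simp; omega) zero_ne_one
        exact ⟨show Xs 0 ω < t by linarith [hω 1], show Xs 1 ω < t by linarith [hω 0]⟩
    _ = μ (Xs 0 ⁻¹' Iio t) * μ (Xs 1 ⁻¹' Iio t) :=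
        (hindep.indepFun zero_ne_one).measure_inter_preimage_eq_mul _ _
          measurableSet_Iio measurableSet_Iio
    _ = μ {ω | X ω < t} ^ 2 := by
        rw [(hident 0).measure_mem_eq measurableSet_Iio,
          (hident 1).measure_mem_eq measurableSet_Iio, sq]
        rfl

lemma measure_inter_le_mul_of_cond_le [IsFiniteMeasure μ] {s t : Set Ω} (hs : MeasurableSet s)
    {K : ℝ≥0∞} (h : μ s ≠ 0 → μ[t | s] ≤ K) : μ (s ∩ t) ≤ μ s * K := by
  rcases eq_or_ne (μ s) 0 with h0 | h0
  · simp [h0, measure_inter_null_of_null_left]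
  · rw [← cond_mul_eq_inter hs, mul_comm]
    exact mul_le_mul_right (h h0) _

lemma measure_inter_preimage_le_of_cond_le [IsFiniteMeasure μ] {α : Type*} [Countable α]
    [MeasurableSpace α] [MeasurableSingletonClass α] {Z : Ω → α} (hZ : Measurable Z)
    {A : Set Ω} {s : Set α} {K : ℝ≥0∞}
    (h : ∀ m ∈ s, μ (Z ⁻¹' {m}) ≠ 0 → μ[A | Z ⁻¹' {m}] ≤ K) :
    μ (A ∩ Z ⁻¹' s) ≤ μ (Z ⁻¹' s) * K := by
  have hdisj : s.PairwiseDisjoint fun m => Z ⁻¹' {m} :=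
    fun m _ m' _ hne => (disjoint_singleton.2 hne).preimage Z
  have hfiber : Z ⁻¹' s = ⋃ m ∈ s, Z ⁻¹' {m} := (biUnion_preimage_singleton Z s).symm
  calc μ (A ∩ Z ⁻¹' s) = μ (⋃ m ∈ s, Z ⁻¹' {m} ∩ A) := by
        rw [inter_comm, hfiber, iUnion₂_inter]
    _ ≤ ∑' m : s, μ (Z ⁻¹' {(m : α)} ∩ A) := measure_biUnion_le μ s.to_countable _
    _ ≤ ∑' m : s, μ (Z ⁻¹' {(m : α)}) * K := ENNReal.tsum_le_tsum fun m =>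
        measure_inter_le_mul_of_cond_le (hZ (measurableSet_singleton _)) (h m m.2)
    _ = μ (Z ⁻¹' s) * K := by
        rw [ENNReal.tsum_mul_right, hfiber,
          measure_biUnion s.to_countable hdisj fun m _ => hZ (measurableSet_singleton m)]

lemma toReal_cond_le_of_measure_lt_le_sq [IsFiniteMeasure μ] {W : Ω → ℝ} (hW : Measurable W)
    {B : Set Ω} {c C τ s ε : ℝ} (hc : 0 < c) (hs : 0 ≤ s) (hε : 0 < ε)
    (hlower : c * ε ^ τ ≤ (μ {ω | W ω < ε}).toReal)
    (hupper : (μ {ω | W ω < s * ε}).toReal ≤ C * (s * ε) ^ τ)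
    (hB : μ ({ω | W ω < ε} ∩ B) ≤ μ {ω | W ω < s * ε} ^ 2) :
    (μ[B | {ω | W ω < ε}]).toReal ≤ C ^ 2 / c * s ^ (2 * τ) * ε ^ τ := by
  have hετ : 0 < ε ^ τ := Real.rpow_pos_of_pos hε τ
  have hnum : (μ ({ω | W ω < ε} ∩ B)).toReal ≤ (C * (s * ε) ^ τ) ^ 2 := by
    calc (μ ({ω | W ω < ε} ∩ B)).toReal ≤ (μ {ω | W ω < s * ε}).toReal ^ 2 := by
          rw [← ENNReal.toReal_pow]; exact ENNReal.toReal_mono (by finiteness) hB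
      _ ≤ (C * (s * ε) ^ τ) ^ 2 := by gcongr
  have hrpow : (C * (s * ε) ^ τ) ^ 2 / (c * ε ^ τ) = C ^ 2 / c * s ^ (2 * τ) * ε ^ τ := by
    rw [Real.mul_rpow hs hε.le, mul_comm 2 τ, Real.rpow_mul hs, Real.rpow_two]
    field_simp
  rw [cond_apply (s := {ω | W ω < ε}) (hW measurableSet_Iio), ENNReal.toReal_mul,
    ENNReal.toReal_inv, inv_mul_eq_div, ← hrpow]
  exact div_le_div₀ (by positivity) hnum (mul_pos hc hετ) hlower

lemma measure_lt_inter_one_lt_le_sq [IsProbabilityMeasure μ] {W : Ω → ℝ} (hW : Measurable W)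
    {Ws : ℕ → Ω → ℝ} (hWs : ∀ i, Measurable (Ws i)) (hident : ∀ i, IdentDistrib (Ws i) W μ μ)
    (hindep : iIndepFun Ws μ) (hWnonneg : ∀ᵐ ω ∂μ, 0 ≤ W ω) {Z : Ω → ℕ} (hZ : Measurable Z)
    {b : ℝ} (hb : 0 < b)
    (hcond : ∀ m : ℕ, 1 < m → μ {ω | Z ω = m} ≠ 0 →
      Measure.map W μ[|{ω | Z ω = m}] =
        Measure.map (fun ω => b⁻¹ * ∑ i ∈ Finset.range m, Ws i ω) μ) (ε : ℝ) :
    μ ({ω | W ω < ε} ∩ {ω | 1 < Z ω}) ≤ μ {ω | W ω < b * ε} ^ 2 := by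
  refine (measure_inter_preimage_le_of_cond_le hZ (s := Ioi 1) fun m hm hm0 => ?_).trans
    (mul_le_of_le_one_left' prob_le_one)
  have hsum : Measurable fun ω => b⁻¹ * ∑ i ∈ Finset.range m, Ws i ω :=
    (Finset.measurable_sum _ fun i _ => hWs i).const_mul _
  calc μ[{ω | W ω < ε} | {ω | Z ω = m}] = Measure.map W μ[|{ω | Z ω = m}] (Iio ε) :=
        (Measure.map_apply hW measurableSet_Iio).symm
    _ = μ {ω | b⁻¹ * ∑ i ∈ Finset.range m, Ws i ω < ε} := by
        rw [hcond m hm hm0, Measure.map_apply hsum measurableSet_Iio]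
        rfl
    _ = μ {ω | ∑ i ∈ Finset.range m, Ws i ω < b * ε} := by
        simp_rw [inv_mul_lt_iff₀ hb]
    _ ≤ _ := measure_sum_range_lt_le_sq hident hindep hWnonneg hm _

end ProbabilityTheory

theorem stmt16_general {Ω : Type*} [MeasureSpace Ω] [IsProbabilityMeasure (ℙ : Measure Ω)]
    (W : Ω → ℝ) (hW : Measurable W)
    (Ws : ℕ → Ω → ℝ) (hWs : ∀ i, Measurable (Ws i))
    (hiid : ∀ i, Measure.map (Ws i) ℙ = Measure.map W ℙ)
    (hindep : iIndepFun Ws ℙ)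
    (Zn : Ω → ℕ) (hZn : Measurable Zn)
    (c C τ a : ℝ) (hc : 0 < c) (hτ : 0 < τ) (ha : 1 < a)
    (htail : ∀ ε : ℝ, 0 < ε → ε < 1 →
      c * ε ^ τ ≤ (ℙ {ω | W ω < ε}).toReal ∧ (ℙ {ω | W ω < ε}).toReal ≤ C * ε ^ τ)
    (n : ℕ)
    (hcond : ∀ m : ℕ, 1 ≤ m → ℙ {ω | Zn ω = m} ≠ 0 →
      Measure.map W (ℙ[|{ω | Zn ω = m}]) =
        Measure.map (fun ω => (a ^ n)⁻¹ * ∑ i ∈ Finset.range m, Ws i ω) ℙ) :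
    (∃ ε₀ > 0, ∀ ε ∈ Set.Ioo (0:ℝ) ε₀,
      ((ℙ[|{ω | W ω < ε}]) {ω | 1 < Zn ω}).toReal ≤
        (C ^ 2 / c) * a ^ (2 * (n : ℝ) * τ) * ε ^ τ) ∧
    Filter.Tendsto (fun ε : ℝ => ((ℙ[|{ω | W ω < ε}]) {ω | 1 < Zn ω}).toReal)
      (nhdsWithin 0 (Set.Ioi 0)) (nhds 0) := by
  have han : 1 ≤ a ^ n := one_le_pow₀ ha.le
  have hident : ∀ i, IdentDistrib (Ws i) W ℙ ℙ :=
    fun i => ⟨(hWs i).aemeasurable, hW.aemeasurable, hiid i⟩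
  have hWnonneg : ∀ᵐ ω ∂ℙ, 0 ≤ W ω :=
    (ae_pos_of_measure_lt_le_rpow hτ fun ε h0 h1 => (htail ε h0 h1).2).mono fun _ h => h.le
  have hinter := measure_lt_inter_one_lt_le_sq hW hWs hident hindep hWnonneg hZn
    (zero_lt_one.trans_le han) (fun m hm => hcond m hm.le)
  have hbound : ∀ ε ∈ Ioo (0:ℝ) (a ^ n)⁻¹,
      (ℙ[{ω | 1 < Zn ω} | {ω | W ω < ε}]).toReal ≤ C ^ 2 / c * a ^ (2 * (n : ℝ) * τ) * ε ^ τ := by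
    rintro ε ⟨hε0, hε⟩
    have hpow : a ^ (2 * (n : ℝ) * τ) = (a ^ n) ^ (2 * τ) := by
      rw [← Real.rpow_natCast_mul (by positivity)]; ring_nf
    rw [hpow]
    exact toReal_cond_le_of_measure_lt_le_sq hW hc (by positivity) hε0
      (htail ε hε0 (hε.trans_le (inv_le_one_of_one_le₀ han))).1
      (htail _ (by positivity) (by rwa [← lt_inv_mul_iff₀ (by positivity), mul_one])).2
      (hinter ε)
  have hε₀ : 0 < (a ^ n)⁻¹ := by positivity
  refine ⟨⟨(a ^ n)⁻¹, hε₀, hbound⟩, ?_⟩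
  refine tendsto_of_tendsto_of_tendsto_of_le_of_le' tendsto_const_nhds
    (tendsto_const_mul_rpow_nhdsGT_zero (C ^ 2 / c * a ^ (2 * (n : ℝ) * τ)) hτ)
    (.of_forall fun _ => ENNReal.toReal_nonneg) ?_
  filter_upwards [Ioo_mem_nhdsGT hε₀] using hbound

/-- The case `μ = 1` of the conditioning principle: under the two-sided tail bound
`c ε^τ ≤ P(W < ε) ≤ C ε^τ` and the self-similarity of `W` given `Z_n = m`,
`P(Z_n > 1 | W < ε) ≤ (C²/c) a^{2nτ} ε^τ` for all small `ε`, and in particular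
`P(Z_n > 1 | W < ε) → 0` as `ε ↓ 0`. -/
theorem stmt16 {Ω : Type*} [MeasureSpace Ω] [IsProbabilityMeasure (ℙ : Measure Ω)]
    (W : Ω → ℝ) (hW : Measurable W)
    (Ws : ℕ → Ω → ℝ) (hWs : ∀ i, Measurable (Ws i))
    (hiid : ∀ i, Measure.map (Ws i) ℙ = Measure.map W ℙ)
    (hindep : iIndepFun Ws ℙ)
    (Zn : Ω → ℕ) (hZn : Measurable Zn) (hZ1 : ∀ ω, 1 ≤ Zn ω)
    (c C τ a : ℝ) (hc : 0 < c) (hcC : c ≤ C) (hτ : 0 < τ) (ha : 1 < a)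
    (hWpos : ∀ ε > 0, 0 < ℙ {ω | W ω < ε})
    (htail : ∀ ε : ℝ, 0 < ε → ε < 1 →
      c * ε ^ τ ≤ (ℙ {ω | W ω < ε}).toReal ∧ (ℙ {ω | W ω < ε}).toReal ≤ C * ε ^ τ)
    (n : ℕ)
    (hcond : ∀ m : ℕ, 1 ≤ m → ℙ {ω | Zn ω = m} ≠ 0 →
      Measure.map W (ℙ[|{ω | Zn ω = m}]) =
        Measure.map (fun ω => (a ^ n)⁻¹ * ∑ i ∈ Finset.range m, Ws i ω) ℙ) :
    (∃ ε₀ > 0, ∀ ε ∈ Set.Ioo (0:ℝ) ε₀,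
      ((ℙ[|{ω | W ω < ε}]) {ω | 1 < Zn ω}).toReal ≤
        (C ^ 2 / c) * a ^ (2 * (n : ℝ) * τ) * ε ^ τ) ∧
    Filter.Tendsto (fun ε : ℝ => ((ℙ[|{ω | W ω < ε}]) {ω | 1 < Zn ω}).toReal)
      (nhdsWithin 0 (Set.Ioi 0)) (nhds 0) :=
  stmt16_general W hW Ws hWs hiid hindep Zn hZn c C τ a hc hτ ha htail n hcond
end
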